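/- Work in ℝ^d with A : ℝ^d → ℝ^d continuous linear, ‖A‖ ≤ C_M, and V : ℝ^d → ℝ three times continuously differentiable with ‖∇V(z)‖ ≤ G₁, ‖D²V(z)‖ ≤ G₂ and ‖D³V(z)‖ ≤ G₃ for all z ∈ ℝ^d. Fix constants α₂, β₂, C_α, C_β, R and leapfrog parameters α = 1 + α₂·δt² + α̃(δt), β = 1 + β₂·δt² + β̃(δt) with |α̃(δt)| ≤ C_α·δt³, |β̃(δt)| ≤ C_β·δt³ (the case α₁ = β₁ = 0). Then there exists a constant C, depending only on R, C_M, C_α, C_β, α₂, β₂, G₁, G₂, G₃, with the following property: for every δt ∈ (0,1], every t₀ ∈ ℝ, every y₀, x₀ ∈ ℝ^d with ‖y₀‖ ≤ R, ‖x₀‖ ≤ R, and every pair of differentiable curves y, x : [t₀, t₀ + δt] → ℝ^d with y(t₀) = y₀, x(t₀) = x₀, y'(t) = A·x(t), x'(t) = −∇V(y(t)) and ‖x(t)‖ ≤ R on [t₀, t₀ + δt], the local truncation errors of the scheme satisfy ‖(y(t₀ + δt) − y⁺) + β₂·δt²·y₀‖ ≤ C·δt³ and ‖(x(t₀ + δt)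 − x⁺) + 2α₂·δt²·x₀‖ ≤ C·δt³, where (y⁺, x⁺) is one step of the parameterized leapfrog scheme from (y₀, x₀). -/

import Mathlib

/-!
The exact flow and one leapfrog step are both compared with the second-order Taylor polynomial
`(y₀ + δ A x₀ - δ²/2 A ∇V(y₀), x₀ - δ ∇V(y₀) - δ²/2 D²V(y₀) A x₀)` of the flow at `t₀`.
For the flow, the mean value inequality on `[t₀, t₀ + δ]` is applied three times, each estimate
feeding the derivative bound of the next, which pushes the error down to `O(δ³)`.
For the scheme, with `α = 1 + a` and `β = 1 + b`, `a, b = O(δ²)`, the step is the Taylor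
polynomial plus `β₂ δ² y₀` (resp. `2 α₂ δ² x₀`) plus explicit `O(δ³)` terms; the only
non-polynomial one is `δ/2` times the first-order Taylor remainder of `∇V` at `y⁺`, which is
`O(‖y⁺ - y₀‖²) = O(δ²)`.
-/

open Set

section Normed

variable {E : Type*} [SeminormedAddCommGroup E]

lemma norm_sub_add_le_of_norm_sub_le {u v w T : E} {K₁ K₂ r : ℝ}
    (hu : ‖u - T‖ ≤ K₁ * r) (hv : ‖v - T - w‖ ≤ K₂ * r) : ‖u - v + w‖ ≤ (K₁ + K₂) * r := by
  calc ‖u - v + w‖ = ‖(u - T) - (v - T - w)‖ := by congr 1; abel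
    _ ≤ K₁ * r + K₂ * r := (norm_sub_le _ _).trans (add_le_add hu hv)
    _ = (K₁ + K₂) * r := by ring

lemma norm_smul_le_of_le [NormedSpace ℝ E] {r a b : ℝ} {v : E} (hr : |r| ≤ a)
    (hv : ‖v‖ ≤ b) : ‖r • v‖ ≤ a * b := by
  rw [norm_smul, Real.norm_eq_abs]
  exact mul_le_mul hr hv (norm_nonneg _) ((abs_nonneg r).trans hr)

end Normed

section Calculus

variable {E F : Type*} [NormedAddCommGroup E] [NormedSpace ℝ E]
  [NormedAddCommGroup F] [NormedSpace ℝ F]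

lemma norm_sub_le_of_hasDerivAt_Icc {f f' : ℝ → E} {a δ K t : ℝ}
    (hf : ∀ s ∈ Icc a (a + δ), HasDerivAt f (f' s) s)
    (hK : ∀ s ∈ Icc a (a + δ), ‖f' s‖ ≤ K) (ht : t ∈ Icc a (a + δ)) :
    ‖f t - f a‖ ≤ K * δ := by
  have hK₀ : 0 ≤ K := (norm_nonneg _).trans (hK a ⟨le_rfl, ht.1.trans ht.2⟩)
  calc ‖f t - f a‖ ≤ K * (t - a) :=
        norm_image_sub_le_of_norm_deriv_le_segment' (fun s hs => (hf s hs).hasDerivWithinAt)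
          (fun s hs => hK s (Ico_subset_Icc_self hs)) t ht
    _ ≤ K * δ := by gcongr; linarith [ht.2]

lemma hasDerivAt_sub_smul_add_sq_smul (t₀ s : ℝ) (v w : E) :
    HasDerivAt (fun t => (t - t₀) • v + ((t - t₀) ^ 2 / 2) • w) (v + (s - t₀) • w) s := by
  have hlin := ((hasDerivAt_id s).sub_const t₀).smul_const v
  have hsq := ((((hasDerivAt_id s).sub_const t₀).pow 2).div_const 2).smul_const w
  refine (hlin.add hsq).congr_deriv ?_
  simp only [id, one_smul]
  congr 2
  ring

lemma norm_sub_le_of_norm_fderiv_le {g : E → F} {g' : E → E →L[ℝ] F} {L : ℝ}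
    (hg : ∀ z, HasFDerivAt g (g' z) z) (hL : ∀ z, ‖g' z‖ ≤ L) (a b : E) :
    ‖g b - g a‖ ≤ L * ‖b - a‖ :=
  convex_univ.norm_image_sub_le_of_norm_hasFDerivWithin_le
    (fun z _ => (hg z).hasFDerivWithinAt) (fun z _ => hL z) trivial trivial

lemma norm_sub_sub_fderiv_le {g : E → F} {g' : E → E →L[ℝ] F}
    {g'' : E → E →L[ℝ] E →L[ℝ] F} {L : ℝ} (hg : ∀ z, HasFDerivAt g (g' z) z)
    (hg' : ∀ z, HasFDerivAt g' (g'' z) z) (hL : ∀ z, ‖g'' z‖ ≤ L) (a b : E) :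
    ‖g b - g a - g' a (b - a)‖ ≤ L * ‖b - a‖ ^ 2 := by
  have hL₀ : 0 ≤ L := (ContinuousLinearMap.opNorm_nonneg _).trans (hL a)
  rw [sq, ← mul_assoc]
  refine (convex_segment a b).norm_image_sub_le_of_norm_hasFDerivWithin_le'
    (fun z _ => (hg z).hasFDerivWithinAt) (fun z hz => ?_)
    (left_mem_segment ℝ a b) (right_mem_segment ℝ a b)
  calc ‖g' z - g' a‖ ≤ L * ‖z - a‖ := norm_sub_le_of_norm_fderiv_le hg' hL a z
    _ ≤ L * ‖b - a‖ := by gcongr; exact norm_sub_le_of_mem_segment hz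

lemma ContDiff.gradient {H : Type*} [NormedAddCommGroup H] [InnerProductSpace ℝ H]
    [CompleteSpace H] {V : H → ℝ} {n : WithTop ℕ∞} (hV : ContDiff ℝ (n + 1) V) :
    ContDiff ℝ n (gradient V) :=
  (InnerProductSpace.toDual ℝ H).symm.contDiff.comp (hV.fderiv_right le_rfl)

end Calculus

section Scalar

variable {c e C δ : ℝ}

lemma abs_mul_sq_add_le (hδ : 0 < δ) (hδ₁ : δ ≤ 1) (he : |e| ≤ C * δ ^ 3) :
    |c * δ ^ 2 + e| ≤ (|c| + C) * δ ^ 2 := by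
  have hC : 0 ≤ C := nonneg_of_mul_nonneg_left ((abs_nonneg e).trans he) (by positivity)
  calc |c * δ ^ 2 + e| ≤ |c| * δ ^ 2 + C * δ ^ 3 := by
        grw [abs_add_le, abs_mul, abs_of_nonneg (sq_nonneg δ), he]
    _ ≤ |c| * δ ^ 2 + C * δ ^ 2 := by
        gcongr |c| * δ ^ 2 + C * ?_; exact pow_le_pow_of_le_one hδ.le hδ₁ (by norm_num : 2 ≤ 3)
    _ = (|c| + C) * δ ^ 2 := by ring

lemma abs_two_mul_add_sq_le (hδ : 0 < δ) (hδ₁ : δ ≤ 1) (he : |e| ≤ C * δ ^ 3) :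
    |2 * e + (c * δ ^ 2 + e) ^ 2| ≤ (2 * C + (|c| + C) ^ 2) * δ ^ 3 := by
  have hsq : (c * δ ^ 2 + e) ^ 2 ≤ ((|c| + C) * δ ^ 2) ^ 2 := by
    rw [← sq_abs]; gcongr; exact abs_mul_sq_add_le hδ hδ₁ he
  calc |2 * e + (c * δ ^ 2 + e) ^ 2| ≤ 2 * |e| + (c * δ ^ 2 + e) ^ 2 := by
        grw [abs_add_le, abs_mul, abs_two, abs_sq]
    _ ≤ 2 * (C * δ ^ 3) + ((|c| + C) * δ ^ 2) ^ 2 := by grw [he, hsq]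
    _ = (2 * C + (|c| + C) ^ 2 * δ) * δ ^ 3 := by ring
    _ ≤ (2 * C + (|c| + C) ^ 2) * δ ^ 3 := by
        gcongr (2 * C + ?_) * _
        exact mul_le_of_le_one_right (sq_nonneg _) hδ₁

end Scalar

section Hamiltonian

variable {E : Type*} [NormedAddCommGroup E] [NormedSpace ℝ E]

def IsHamiltonianCurveOn (A : E →L[ℝ] E) (g : E → E) (y x : ℝ → E) (s : Set ℝ) : Prop :=
  ∀ t ∈ s, HasDerivAt y (A (x t)) t ∧ HasDerivAt x (-g (y t)) t

namespace IsHamiltonianCurveOn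

variable {A : E →L[ℝ] E} {g : E → E} {g' : E → E →L[ℝ] E} {g'' : E → E →L[ℝ] E →L[ℝ] E}
  {y x : ℝ → E} {t₀ δ t C_M R G₁ G₂ G₃ : ℝ}

lemma norm_pos_sub_le (h : IsHamiltonianCurveOn A g y x (Icc t₀ (t₀ + δ))) (hA : ‖A‖ ≤ C_M)
    (hx : ∀ s ∈ Icc t₀ (t₀ + δ), ‖x s‖ ≤ R) (ht : t ∈ Icc t₀ (t₀ + δ)) :
    ‖y t - y t₀‖ ≤ C_M * R * δ :=
  norm_sub_le_of_hasDerivAt_Icc (fun s hs => (h s hs).1)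
    (fun s hs => A.le_of_opNorm_le_of_le hA (hx s hs)) ht

lemma norm_mom_sub_le (h : IsHamiltonianCurveOn A g y x (Icc t₀ (t₀ + δ)))
    (hG₁ : ∀ z, ‖g z‖ ≤ G₁) (ht : t ∈ Icc t₀ (t₀ + δ)) :
    ‖x t - x t₀‖ ≤ G₁ * δ :=
  norm_sub_le_of_hasDerivAt_Icc (fun s hs => (h s hs).2)
    (fun _ _ => (norm_neg (g _)).le.trans (hG₁ _)) ht

lemma norm_mom_sub_linear_le (h : IsHamiltonianCurveOn A g y x (Icc t₀ (t₀ + δ)))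
    (hA : ‖A‖ ≤ C_M) (hx : ∀ s ∈ Icc t₀ (t₀ + δ), ‖x s‖ ≤ R)
    (hg : ∀ z, HasFDerivAt g (g' z) z) (hG₂ : ∀ z, ‖g' z‖ ≤ G₂) (ht : t ∈ Icc t₀ (t₀ + δ)) :
    ‖x t - x t₀ + (t - t₀) • g (y t₀)‖ ≤ G₂ * (C_M * R) * δ ^ 2 := by
  have hG₂₀ : 0 ≤ G₂ := (norm_nonneg _).trans (hG₂ 0)
  have hderiv : ∀ s ∈ Icc t₀ (t₀ + δ), HasDerivAt (fun s => x s + (s - t₀) • g (y t₀))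
      (-g (y s) + g (y t₀)) s := fun s hs => by
    have := (h s hs).2.add (((hasDerivAt_id s).sub_const t₀).smul_const (g (y t₀)))
    rwa [one_smul] at this
  have hbound : ∀ s ∈ Icc t₀ (t₀ + δ), ‖-g (y s) + g (y t₀)‖ ≤ G₂ * (C_M * R * δ) := by
    intro s hs
    rw [neg_add_eq_sub, norm_sub_rev]
    calc ‖g (y s) - g (y t₀)‖ ≤ G₂ * ‖y s - y t₀‖ := norm_sub_le_of_norm_fderiv_le hg hG₂ _ _
      _ ≤ G₂ * (C_M * R * δ) := by gcongr; exact h.norm_pos_sub_le hA hx hs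
  have := norm_sub_le_of_hasDerivAt_Icc hderiv hbound ht
  simp only [sub_self, zero_smul, add_zero] at this
  calc _ = ‖x t + (t - t₀) • g (y t₀) - x t₀‖ := by congr 1; abel
    _ ≤ _ := this
    _ = _ := by ring

lemma norm_pos_sub_linear_le (h : IsHamiltonianCurveOn A g y x (Icc t₀ (t₀ + δ)))
    (hA : ‖A‖ ≤ C_M) (hG₁ : ∀ z, ‖g z‖ ≤ G₁) (ht : t ∈ Icc t₀ (t₀ + δ)) :
    ‖y t - y t₀ - (t - t₀) • A (x t₀)‖ ≤ C_M * G₁ * δ ^ 2 := by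
  have hderiv : ∀ s ∈ Icc t₀ (t₀ + δ), HasDerivAt (fun s => y s - (s - t₀) • A (x t₀))
      (A (x s - x t₀)) s := fun s hs => by
    have := (h s hs).1.sub (((hasDerivAt_id s).sub_const t₀).smul_const (A (x t₀)))
    rwa [one_smul, ← map_sub] at this
  have hbound : ∀ s ∈ Icc t₀ (t₀ + δ), ‖A (x s - x t₀)‖ ≤ C_M * (G₁ * δ) := fun s hs =>
    A.le_of_opNorm_le_of_le hA (h.norm_mom_sub_le hG₁ hs)
  have := norm_sub_le_of_hasDerivAt_Icc hderiv hbound ht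
  simp only [sub_self, zero_smul, sub_zero] at this
  calc _ = ‖y t - (t - t₀) • A (x t₀) - y t₀‖ := by congr 1; abel
    _ ≤ _ := this
    _ = _ := by ring

lemma norm_pos_sub_taylor_le (h : IsHamiltonianCurveOn A g y x (Icc t₀ (t₀ + δ)))
    (hδ : 0 ≤ δ) (hA : ‖A‖ ≤ C_M) (hx : ∀ s ∈ Icc t₀ (t₀ + δ), ‖x s‖ ≤ R)
    (hg : ∀ z, HasFDerivAt g (g' z) z) (hG₂ : ∀ z, ‖g' z‖ ≤ G₂) :
    ‖y (t₀ + δ) - (y t₀ + δ • A (x t₀) - (δ ^ 2 / 2) • A (g (y t₀)))‖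
      ≤ C_M * (G₂ * (C_M * R)) * δ ^ 3 := by
  have hderiv : ∀ s ∈ Icc t₀ (t₀ + δ), HasDerivAt
      (fun s => y s + ((s - t₀) • -A (x t₀) + ((s - t₀) ^ 2 / 2) • A (g (y t₀))))
      (A (x s - x t₀ + (s - t₀) • g (y t₀))) s := fun s hs => by
    have := (h s hs).1.add (hasDerivAt_sub_smul_add_sq_smul t₀ s (-A (x t₀)) (A (g (y t₀))))
    refine this.congr_deriv ?_
    rw [map_add, map_sub, map_smul]
    abel
  have hbound : ∀ s ∈ Icc t₀ (t₀ + δ), ‖A (x s - x t₀ + (s - t₀) • g (y t₀))‖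
      ≤ C_M * (G₂ * (C_M * R) * δ ^ 2) := fun s hs =>
    A.le_of_opNorm_le_of_le hA (h.norm_mom_sub_linear_le hA hx hg hG₂ hs)
  have := norm_sub_le_of_hasDerivAt_Icc hderiv hbound ⟨by linarith, le_rfl⟩
  simp only [sub_self, zero_smul, add_sub_cancel_left] at this
  calc _ = _ := by congr 1; module
    _ ≤ _ := this
    _ = _ := by ring

lemma norm_mom_sub_taylor_le (h : IsHamiltonianCurveOn A g y x (Icc t₀ (t₀ + δ)))
    (hδ : 0 ≤ δ) (hA : ‖A‖ ≤ C_M) (hx : ∀ s ∈ Icc t₀ (t₀ + δ), ‖x s‖ ≤ R)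
    (hG₁ : ∀ z, ‖g z‖ ≤ G₁) (hg : ∀ z, HasFDerivAt g (g' z) z) (hG₂ : ∀ z, ‖g' z‖ ≤ G₂)
    (hg' : ∀ z, HasFDerivAt g' (g'' z) z) (hG₃ : ∀ z, ‖g'' z‖ ≤ G₃) :
    ‖x (t₀ + δ) - (x t₀ - δ • g (y t₀) - (δ ^ 2 / 2) • g' (y t₀) (A (x t₀)))‖
      ≤ (G₃ * (C_M * R) ^ 2 + G₂ * (C_M * G₁)) * δ ^ 3 := by
  have hG₃₀ : 0 ≤ G₃ := (ContinuousLinearMap.opNorm_nonneg _).trans (hG₃ 0)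
  set B := g' (y t₀)
  have hderiv : ∀ s ∈ Icc t₀ (t₀ + δ), HasDerivAt
      (fun s => x s + ((s - t₀) • g (y t₀) + ((s - t₀) ^ 2 / 2) • B (A (x t₀))))
      (-(g (y s) - g (y t₀) - B (y s - y t₀)) - B (y s - y t₀ - (s - t₀) • A (x t₀))) s :=
    fun s hs => by
      have := (h s hs).2.add (hasDerivAt_sub_smul_add_sq_smul t₀ s (g (y t₀)) (B (A (x t₀))))
      refine this.congr_deriv ?_
      simp only [map_sub, map_smul]
      abel
  have hbound : ∀ s ∈ Icc t₀ (t₀ + δ),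
      ‖-(g (y s) - g (y t₀) - B (y s - y t₀)) - B (y s - y t₀ - (s - t₀) • A (x t₀))‖
        ≤ G₃ * (C_M * R) ^ 2 * δ ^ 2 + G₂ * (C_M * G₁ * δ ^ 2) := by
    intro s hs
    refine (norm_sub_le _ _).trans (add_le_add ?_ ?_)
    · calc ‖-(g (y s) - g (y t₀) - B (y s - y t₀))‖ ≤ G₃ * ‖y s - y t₀‖ ^ 2 := by
            rw [norm_neg]; exact norm_sub_sub_fderiv_le hg hg' hG₃ _ _
        _ ≤ G₃ * (C_M * R * δ) ^ 2 := by gcongr; exact h.norm_pos_sub_le hA hx hs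
        _ = G₃ * (C_M * R) ^ 2 * δ ^ 2 := by ring
    · exact B.le_of_opNorm_le_of_le (hG₂ _) (h.norm_pos_sub_linear_le hA hG₁ hs)
  have := norm_sub_le_of_hasDerivAt_Icc hderiv hbound ⟨by linarith, le_rfl⟩
  simp only [sub_self, zero_smul, add_sub_cancel_left] at this
  calc _ = _ := by congr 1; module
    _ ≤ _ := this
    _ = _ := by ring

end IsHamiltonianCurveOn

end Hamiltonian

section Leapfrog

variable {E : Type*} [NormedAddCommGroup E] [NormedSpace ℝ E]

noncomputable def leapfrogPos (A : E →L[ℝ] E) (g : E → E) (δ α β : ℝ) (y x : E) : E :=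
  β • y + δ • A (α • x - (δ / 2) • g y)

noncomputable def leapfrogMom (A : E →L[ℝ] E) (g : E → E) (δ α β : ℝ) (y x : E) : E :=
  α ^ 2 • x - (δ / 2) • (α • g y + g (leapfrogPos A g δ α β y x))

noncomputable def leapfrogPosConst (α₂ β₂ C_α C_β C_M R G₁ : ℝ) : ℝ :=
  (|β₂| + C_β) * R + (|α₂| + C_α) * (C_M * R) + C_M * G₁ / 2

variable {A : E →L[ℝ] E} {g : E → E} {g' : E → E →L[ℝ] E} {g'' : E → E →L[ℝ] E →L[ℝ] E}
  {δ α₂ β₂ αt βt C_α C_β C_M R G₁ G₂ G₃ : ℝ} {y x : E}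

lemma norm_leapfrogPos_sub_taylor_le (hδ : 0 < δ) (hδ₁ : δ ≤ 1) (hαt : |αt| ≤ C_α * δ ^ 3)
    (hβt : |βt| ≤ C_β * δ ^ 3) (hA : ‖A‖ ≤ C_M) (hy : ‖y‖ ≤ R) (hx : ‖x‖ ≤ R) :
    ‖leapfrogPos A g δ (1 + α₂ * δ ^ 2 + αt) (1 + β₂ * δ ^ 2 + βt) y x
        - (y + δ • A x - (δ ^ 2 / 2) • A (g y)) - (β₂ * δ ^ 2) • y‖
      ≤ (C_β * R + (|α₂| + C_α) * (C_M * R)) * δ ^ 3 := by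
  have hδα : |δ * (α₂ * δ ^ 2 + αt)| ≤ (|α₂| + C_α) * δ ^ 3 := by
    rw [abs_mul, abs_of_pos hδ]
    nlinarith [abs_mul_sq_add_le (c := α₂) hδ hδ₁ hαt]
  calc _ = ‖βt • y + (δ * (α₂ * δ ^ 2 + αt)) • A x‖ := by
        simp only [leapfrogPos, map_sub, map_smul]; congr 1; module
    _ ≤ C_β * δ ^ 3 * R + (|α₂| + C_α) * δ ^ 3 * (C_M * R) :=
        (norm_add_le _ _).trans (add_le_add (norm_smul_le_of_le hβt hy)
          (norm_smul_le_of_le hδα (A.le_of_opNorm_le_of_le hA hx)))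
    _ = (C_β * R + (|α₂| + C_α) * (C_M * R)) * δ ^ 3 := by ring

lemma norm_leapfrogPos_sub_sub_le (hδ : 0 < δ) (hδ₁ : δ ≤ 1) (hαt : |αt| ≤ C_α * δ ^ 3)
    (hβt : |βt| ≤ C_β * δ ^ 3) (hA : ‖A‖ ≤ C_M) (hy : ‖y‖ ≤ R) (hx : ‖x‖ ≤ R)
    (hG₁ : ‖g y‖ ≤ G₁) :
    ‖leapfrogPos A g δ (1 + α₂ * δ ^ 2 + αt) (1 + β₂ * δ ^ 2 + βt) y x - y - δ • A x‖
      ≤ leapfrogPosConst α₂ β₂ C_α C_β C_M R G₁ * δ ^ 2 := by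
  have hδα : |δ * (α₂ * δ ^ 2 + αt)| ≤ (|α₂| + C_α) * δ ^ 2 := by
    rw [abs_mul, abs_of_pos hδ]
    nlinarith [abs_mul_sq_add_le (c := α₂) hδ hδ₁ hαt, abs_nonneg (α₂ * δ ^ 2 + αt)]
  have hδ2 : |δ ^ 2 / 2| ≤ δ ^ 2 / 2 := (abs_of_nonneg (by positivity)).le
  calc _ = ‖(β₂ * δ ^ 2 + βt) • y + (δ * (α₂ * δ ^ 2 + αt)) • A x
          - (δ ^ 2 / 2) • A (g y)‖ := by
        simp only [leapfrogPos, map_sub, map_smul]; congr 1; module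
    _ ≤ (|β₂| + C_β) * δ ^ 2 * R + (|α₂| + C_α) * δ ^ 2 * (C_M * R)
          + δ ^ 2 / 2 * (C_M * G₁) :=
        (norm_sub_le _ _).trans (add_le_add ((norm_add_le _ _).trans (add_le_add
          (norm_smul_le_of_le (abs_mul_sq_add_le hδ hδ₁ hβt) hy)
          (norm_smul_le_of_le hδα (A.le_of_opNorm_le_of_le hA hx))))
          (norm_smul_le_of_le hδ2 (A.le_of_opNorm_le_of_le hA hG₁)))
    _ = leapfrogPosConst α₂ β₂ C_α C_β C_M R G₁ * δ ^ 2 := by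
        rw [leapfrogPosConst]; ring

lemma norm_leapfrogPos_sub_le (hδ : 0 < δ) (hδ₁ : δ ≤ 1) (hαt : |αt| ≤ C_α * δ ^ 3)
    (hβt : |βt| ≤ C_β * δ ^ 3) (hA : ‖A‖ ≤ C_M) (hy : ‖y‖ ≤ R) (hx : ‖x‖ ≤ R)
    (hG₁ : ‖g y‖ ≤ G₁) :
    ‖leapfrogPos A g δ (1 + α₂ * δ ^ 2 + αt) (1 + β₂ * δ ^ 2 + βt) y x - y‖
      ≤ (C_M * R + leapfrogPosConst α₂ β₂ C_α C_β C_M R G₁) * δ := by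
  set W := leapfrogPosConst α₂ β₂ C_α C_β C_M R G₁
  have hw := norm_leapfrogPos_sub_sub_le (α₂ := α₂) (β₂ := β₂) hδ hδ₁ hαt hβt hA hy hx hG₁
  have hW : 0 ≤ W := nonneg_of_mul_nonneg_left ((norm_nonneg _).trans hw) (by positivity)
  have hδA : ‖δ • A x‖ ≤ δ * (C_M * R) :=
    norm_smul_le_of_le (abs_of_pos hδ).le (A.le_of_opNorm_le_of_le hA hx)
  calc _ ≤ ‖leapfrogPos A g δ (1 + α₂ * δ ^ 2 + αt) (1 + β₂ * δ ^ 2 + βt) y x - y - δ • A x‖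
        + ‖δ • A x‖ := norm_le_norm_sub_add _ _
    _ ≤ W * δ + δ * (C_M * R) := by
        grw [hw, hδA, pow_le_of_le_one hδ.le hδ₁ two_ne_zero]
    _ = (C_M * R + W) * δ := by ring

lemma norm_leapfrogMom_sub_taylor_le (hδ : 0 < δ) (hδ₁ : δ ≤ 1) (hαt : |αt| ≤ C_α * δ ^ 3)
    (hβt : |βt| ≤ C_β * δ ^ 3) (hA : ‖A‖ ≤ C_M) (hy : ‖y‖ ≤ R) (hx : ‖x‖ ≤ R)
    (hG₁ : ∀ z, ‖g z‖ ≤ G₁) (hg : ∀ z, HasFDerivAt g (g' z) z) (hG₂ : ∀ z, ‖g' z‖ ≤ G₂)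
    (hg' : ∀ z, HasFDerivAt g' (g'' z) z) (hG₃ : ∀ z, ‖g'' z‖ ≤ G₃) :
    ‖leapfrogMom A g δ (1 + α₂ * δ ^ 2 + αt) (1 + β₂ * δ ^ 2 + βt) y x
        - (x - δ • g y - (δ ^ 2 / 2) • g' y (A x)) - (2 * α₂ * δ ^ 2) • x‖
      ≤ ((2 * C_α + (|α₂| + C_α) ^ 2) * R + (|α₂| + C_α) * G₁ / 2
          + G₂ * leapfrogPosConst α₂ β₂ C_α C_β C_M R G₁ / 2
          + G₃ * (C_M * R + leapfrogPosConst α₂ β₂ C_α C_β C_M R G₁) ^ 2 / 2) * δ ^ 3 := by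
  set W := leapfrogPosConst α₂ β₂ C_α C_β C_M R G₁
  set ŷ := leapfrogPos A g δ (1 + α₂ * δ ^ 2 + αt) (1 + β₂ * δ ^ 2 + βt) y x
  have hG₃₀ : 0 ≤ G₃ := (ContinuousLinearMap.opNorm_nonneg _).trans (hG₃ 0)
  have hδ2 : |δ / 2| ≤ δ / 2 := (abs_of_nonneg (by positivity)).le
  have hδα : |δ / 2 * (α₂ * δ ^ 2 + αt)| ≤ δ / 2 * ((|α₂| + C_α) * δ ^ 2) := by
    rw [abs_mul, abs_of_pos (by positivity : 0 < δ / 2)]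
    gcongr; exact abs_mul_sq_add_le hδ hδ₁ hαt
  have hw : ‖g' y (ŷ - y - δ • A x)‖ ≤ G₂ * (W * δ ^ 2) :=
    (g' y).le_of_opNorm_le_of_le (hG₂ y)
      (norm_leapfrogPos_sub_sub_le hδ hδ₁ hαt hβt hA hy hx (hG₁ y))
  have hT : ‖g ŷ - g y - g' y (ŷ - y)‖ ≤ G₃ * ((C_M * R + W) * δ) ^ 2 := by
    grw [norm_sub_sub_fderiv_le hg hg' hG₃,
      norm_leapfrogPos_sub_le hδ hδ₁ hαt hβt hA hy hx (hG₁ y)]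
  calc _ = ‖(2 * αt + (α₂ * δ ^ 2 + αt) ^ 2) • x - (δ / 2 * (α₂ * δ ^ 2 + αt)) • g y
          - (δ / 2) • g' y (ŷ - y - δ • A x) - (δ / 2) • (g ŷ - g y - g' y (ŷ - y))‖ := by
        simp only [leapfrogMom, map_sub, map_smul]; congr 1; module
    _ ≤ (2 * C_α + (|α₂| + C_α) ^ 2) * δ ^ 3 * R + δ / 2 * ((|α₂| + C_α) * δ ^ 2) * G₁
          + δ / 2 * (G₂ * (W * δ ^ 2)) + δ / 2 * (G₃ * ((C_M * R + W) * δ) ^ 2) := by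
        refine (norm_sub_le _ _).trans (add_le_add ((norm_sub_le _ _).trans (add_le_add
          ((norm_sub_le _ _).trans (add_le_add ?_ ?_)) ?_)) ?_)
        · exact norm_smul_le_of_le (abs_two_mul_add_sq_le hδ hδ₁ hαt) hx
        · exact norm_smul_le_of_le hδα (hG₁ y)
        · exact norm_smul_le_of_le hδ2 hw
        · exact norm_smul_le_of_le hδ2 hT
    _ = _ := by ring

end Leapfrog

theorem stmt13_general
    (d : ℕ)
    (A : EuclideanSpace ℝ (Fin d) →L[ℝ] EuclideanSpace ℝ (Fin d))
    (C_M : ℝ) (hA : ‖A‖ ≤ C_M)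
    (V : EuclideanSpace ℝ (Fin d) → ℝ) (hV : ContDiff ℝ 3 V)
    (G₁ G₂ G₃ : ℝ)
    (hG₁ : ∀ z, ‖gradient V z‖ ≤ G₁)
    (hG₂ : ∀ z, ‖fderiv ℝ (gradient V) z‖ ≤ G₂)
    (hG₃ : ∀ z, ‖fderiv ℝ (fderiv ℝ (gradient V)) z‖ ≤ G₃)
    (α₂ β₂ C_α C_β R : ℝ) :
    ∃ C : ℝ, ∀ δt : ℝ, 0 < δt → δt ≤ 1 → ∀ t₀ : ℝ,
      ∀ αt βt : ℝ, |αt| ≤ C_α * δt ^ 3 → |βt| ≤ C_β * δt ^ 3 →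
      ∀ y₀ x₀ : EuclideanSpace ℝ (Fin d), ‖y₀‖ ≤ R → ‖x₀‖ ≤ R →
      ∀ y x : ℝ → EuclideanSpace ℝ (Fin d), y t₀ = y₀ → x t₀ = x₀ →
      (∀ t ∈ Set.Icc t₀ (t₀ + δt), HasDerivAt y (A (x t)) t) →
      (∀ t ∈ Set.Icc t₀ (t₀ + δt), HasDerivAt x (-gradient V (y t)) t) →
      (∀ t ∈ Set.Icc t₀ (t₀ + δt), ‖x t‖ ≤ R) →
      ‖(y (t₀ + δt) - ((1 + β₂ * δt ^ 2 + βt) • y₀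
            + δt • A ((1 + α₂ * δt ^ 2 + αt) • x₀ - (δt / 2) • gradient V y₀)))
          + (β₂ * δt ^ 2) • y₀‖ ≤ C * δt ^ 3 ∧
      ‖(x (t₀ + δt) - ((1 + α₂ * δt ^ 2 + αt) ^ 2 • x₀
            - (δt / 2) • ((1 + α₂ * δt ^ 2 + αt) • gradient V y₀
              + gradient V ((1 + β₂ * δt ^ 2 + βt) • y₀
                + δt • A ((1 + α₂ * δt ^ 2 + αt) • x₀ - (δt / 2) • gradient V y₀)))))
          + (2 * α₂ * δt ^ 2) • x₀‖ ≤ C * δt ^ 3 := by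
  have hgrad : ContDiff ℝ 2 (gradient V) := hV.gradient
  have hg : ∀ z, HasFDerivAt (gradient V) (fderiv ℝ (gradient V) z) z := fun z =>
    (hgrad.differentiable two_ne_zero z).hasFDerivAt
  have hg' : ∀ z, HasFDerivAt (fderiv ℝ (gradient V)) (fderiv ℝ (fderiv ℝ (gradient V)) z) z :=
    fun z => ((hgrad.fderiv_right (m := 1) le_rfl).differentiable one_ne_zero z).hasFDerivAt
  let W := leapfrogPosConst α₂ β₂ C_α C_β C_M R G₁
  refine ⟨max (C_M * (G₂ * (C_M * R)) + (C_β * R + (|α₂| + C_α) * (C_M * R)))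
    (G₃ * (C_M * R) ^ 2 + G₂ * (C_M * G₁) + ((2 * C_α + (|α₂| + C_α) ^ 2) * R
      + (|α₂| + C_α) * G₁ / 2 + G₂ * W / 2 + G₃ * (C_M * R + W) ^ 2 / 2)), ?_⟩
  intro δ hδ hδ₁ t₀ αt βt hαt hβt y₀ x₀ hy₀ hx₀ y x hy0 hx0 hy hx hxR
  subst hy0 hx0
  have hflow : IsHamiltonianCurveOn A (gradient V) y x (Icc t₀ (t₀ + δ)) :=
    fun t ht => ⟨hy t ht, hx t ht⟩
  have hδ₃ : 0 ≤ δ ^ 3 := by positivity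
  constructor
  · exact (norm_sub_add_le_of_norm_sub_le (hflow.norm_pos_sub_taylor_le hδ.le hA hxR hg hG₂)
      (norm_leapfrogPos_sub_taylor_le hδ hδ₁ hαt hβt hA hy₀ hx₀)).trans
      (mul_le_mul_of_nonneg_right (le_max_left _ _) hδ₃)
  · exact (norm_sub_add_le_of_norm_sub_le
      (hflow.norm_mom_sub_taylor_le hδ.le hA hxR hG₁ hg hG₂ hg' hG₃)
      (norm_leapfrogMom_sub_taylor_le hδ hδ₁ hαt hβt hA hy₀ hx₀ hG₁ hg hG₂ hg' hG₃)).trans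
      (mul_le_mul_of_nonneg_right (le_max_right _ _) hδ₃)

/-- Pathwise local truncation error estimate for the parameterized leapfrog scheme
with `α₁ = β₁ = 0`: comparing one scheme step from `(y₀, x₀)` with the exact
Hamiltonian flow from the same initial data, the dominant error terms are
`−β₂·δt²·y₀` in position and `−2α₂·δt²·x₀` in momentum, with remainder of order
`δt³` controlled by a constant depending only on
`R, C_M, C_α, C_β, α₂, β₂, G₁, G₂, G₃`. -/
theorem stmt13
    (d : ℕ) (hd : 1 ≤ d)
    (A : EuclideanSpace ℝ (Fin d) →L[ℝ] EuclideanSpace ℝ (Fin d))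
    (C_M : ℝ) (hA : ‖A‖ ≤ C_M)
    (V : EuclideanSpace ℝ (Fin d) → ℝ) (hV : ContDiff ℝ 3 V)
    (G₁ G₂ G₃ : ℝ)
    (hG₁ : ∀ z, ‖gradient V z‖ ≤ G₁)
    (hG₂ : ∀ z, ‖fderiv ℝ (gradient V) z‖ ≤ G₂)
    (hG₃ : ∀ z, ‖fderiv ℝ (fderiv ℝ (gradient V)) z‖ ≤ G₃)
    (α₂ β₂ C_α C_β R : ℝ) :
    ∃ C : ℝ, ∀ δt : ℝ, 0 < δt → δt ≤ 1 → ∀ t₀ : ℝ,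
      ∀ αt βt : ℝ, |αt| ≤ C_α * δt ^ 3 → |βt| ≤ C_β * δt ^ 3 →
      ∀ y₀ x₀ : EuclideanSpace ℝ (Fin d), ‖y₀‖ ≤ R → ‖x₀‖ ≤ R →
      ∀ y x : ℝ → EuclideanSpace ℝ (Fin d), y t₀ = y₀ → x t₀ = x₀ →
      (∀ t ∈ Set.Icc t₀ (t₀ + δt), HasDerivAt y (A (x t)) t) →
      (∀ t ∈ Set.Icc t₀ (t₀ + δt), HasDerivAt x (-gradient V (y t)) t) →
      (∀ t ∈ Set.Icc t₀ (t₀ + δt), ‖x t‖ ≤ R) →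
      ‖(y (t₀ + δt) - ((1 + β₂ * δt ^ 2 + βt) • y₀
            + δt • A ((1 + α₂ * δt ^ 2 + αt) • x₀ - (δt / 2) • gradient V y₀)))
          + (β₂ * δt ^ 2) • y₀‖ ≤ C * δt ^ 3 ∧
      ‖(x (t₀ + δt) - ((1 + α₂ * δt ^ 2 + αt) ^ 2 • x₀
            - (δt / 2) • ((1 + α₂ * δt ^ 2 + αt) • gradient V y₀
              + gradient V ((1 + β₂ * δt ^ 2 + βt) • y₀
                + δt • A ((1 + α₂ * δt ^ 2 + αt) • x₀ - (δt / 2) • gradient V y₀)))))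
          + (2 * α₂ * δt ^ 2) • x₀‖ ≤ C * δt ^ 3 :=
  stmt13_general d A C_M hA V hV G₁ G₂ G₃ hG₁ hG₂ hG₃ α₂ β₂ C_α C_β R
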